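/- Let g be a finite-dimensional classical Lie superalgebra over ℂ. Then the odd part of the radical of g equals {X ∈ g₁ | [X, g₁] ⊆ z(g)₀}, where z(g) is the center of g. -/

import Mathlib

/-!
If every ideal of `g₀` has a complement, a solvable ideal of `g₀` is central: by induction on the
derived length, `[J, J]` is central, so `[J, J] = [J ⊕ W, J ⊕ W] ⊆ W` for a complement `W` of
`[J, J]`, forcing `[J, J] = 0`, and then `[J, g₀] = [J, J ⊕ W'] ⊆ J ∩ W' = 0`. Hence for a solvable
super ideal `I`, every `x = [X, Y]` with `X ∈ I₁` is central in `g₀`, so by complete reducibility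
of `g₁` it acts semisimply on `g₁`. An eigenvector `u` of `x` for an eigenvalue `μ ≠ 0` lies in
`[I₀, I₁]`, the odd part of the derived ideal, which by induction brackets `g₁` into `z(g)₀`; the
super Jacobi identity then gives `[x, u] = 0`. So `x` acts by zero and `[X, g₁] ⊆ z(g)₀`.
Conversely `{X | [X, g₁] ⊆ z(g)₀}` is the odd part of the ideal `z(g)₀ ⊕ {X | [X, g₁] ⊆ z(g)₀}`,
which is solvable of length two.
-/

/-- The odd data of a complex Lie superalgebra `g = g₀ ⊕ g₁`, where the even part `g₀` is a
complex Lie algebra: the brackets `b01 : g₀ × g₁ → g₁` and `b11 : g₁ × g₁ → g₀`, subject to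
the super-Jacobi identities. -/
structure SuperStructure (g0 g1 : Type*) [LieRing g0] [LieAlgebra ℂ g0]
    [AddCommGroup g1] [Module ℂ g1] where
  b01 : g0 →ₗ[ℂ] g1 →ₗ[ℂ] g1
  b11 : g1 →ₗ[ℂ] g1 →ₗ[ℂ] g0
  symm11 : ∀ u v, b11 u v = b11 v u
  jacobi001 : ∀ x y v, b01 ⁅x, y⁆ v = b01 x (b01 y v) - b01 y (b01 x v)
  jacobi011 : ∀ x u v, ⁅x, b11 u v⁆ = b11 (b01 x u) v + b11 u (b01 x v)
  jacobi111 : ∀ u v w, b01 (b11 u v) w + b01 (b11 v w) u + b01 (b11 w u) v = 0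

variable {g0 g1 : Type*} [LieRing g0] [LieAlgebra ℂ g0] [AddCommGroup g1] [Module ℂ g1]

/-- A (graded) ideal `I = I₀ ⊕ I₁` of the Lie superalgebra `g = g₀ ⊕ g₁`. -/
structure SuperIdeal (S : SuperStructure g0 g1) where
  even : Submodule ℂ g0
  odd : Submodule ℂ g1
  lie00 : ∀ (x : g0), ∀ y ∈ even, ⁅x, y⁆ ∈ even
  lie01 : ∀ (x : g0), ∀ v ∈ odd, S.b01 x v ∈ odd
  lie11 : ∀ (u : g1), ∀ v ∈ odd, S.b11 u v ∈ even
  lie10 : ∀ x ∈ even, ∀ (v : g1), S.b01 x v ∈ odd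

/-- The derived pair `[p, p]` of a pair of subspaces `p = (p₀, p₁)` of `(g₀, g₁)`. -/
def derivedPair (S : SuperStructure g0 g1) (p : Submodule ℂ g0 × Submodule ℂ g1) :
    Submodule ℂ g0 × Submodule ℂ g1 :=
  (Submodule.span ℂ ({z | ∃ x ∈ p.1, ∃ y ∈ p.1, ⁅x, y⁆ = z} ∪
      {z | ∃ u ∈ p.2, ∃ v ∈ p.2, S.b11 u v = z}),
   Submodule.span ℂ {w | ∃ x ∈ p.1, ∃ v ∈ p.2, S.b01 x v = w})

/-- A super ideal is solvable if its derived series terminates at zero. -/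
def IsSolvableIdeal (S : SuperStructure g0 g1) (I : SuperIdeal S) : Prop :=
  ∃ k, (derivedPair S)^[k] (I.even, I.odd) = (⊥, ⊥)

open LieAlgebra LieSubmodule

namespace LieIdeal

variable {R L : Type*} [CommRing R] [LieRing L] [LieAlgebra R L]

lemma le_center_of_lie_self_le_center [ComplementedLattice (LieIdeal R L)] {I : LieIdeal R L}
    (hI : ⁅I, I⁆ ≤ center R L) : I ≤ center R L := by
  have lie_central : ∀ J : LieIdeal R L, ⁅J, ⁅I, I⁆⁆ = ⊥ := fun J =>
    le_bot_iff.mp <| (mono_lie_right J hI).trans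
      (LieModule.ideal_oper_maxTrivSubmodule_eq_bot R L L J).le
  obtain ⟨W, hW⟩ := exists_isCompl ⁅I, I⁆
  have hII : ⁅I, I⁆ = ⊥ := by
    refine hW.disjoint.eq_bot_of_le ?_
    have hIW : I ≤ ⁅I, I⁆ ⊔ W := hW.sup_eq_top ▸ le_top
    calc ⁅I, I⁆ ≤ ⁅⁅I, I⁆ ⊔ W, ⁅I, I⁆ ⊔ W⁆ := mono_lie hIW hIW
      _ = ⁅⁅I, I⁆ ⊔ W, ⁅I, I⁆⁆ ⊔ ⁅⁅I, I⁆ ⊔ W, W⁆ := lie_sup _ _ _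
      _ ≤ W := by rw [lie_central, bot_sup_eq]; exact lie_le_right _ _
  obtain ⟨W', hW'⟩ := exists_isCompl I
  rw [LieModule.le_max_triv_iff_bracket_eq_bot, ← hW'.sup_eq_top, sup_lie, hII, bot_sup_eq]
  exact le_bot_iff.mp ((lie_le_inf W' I).trans hW'.symm.inf_eq_bot.le)

lemma le_center_of_derivedSeriesOfIdeal_eq_bot [ComplementedLattice (LieIdeal R L)] {k : ℕ}
    {I : LieIdeal R L} (hI : derivedSeriesOfIdeal R L k I = ⊥) : I ≤ center R L := by
  induction k generalizing I with
  | zero => rw [derivedSeriesOfIdeal_zero] at hI; exact hI ▸ bot_le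
  | succ k ih =>
    rw [derivedSeriesOfIdeal_add, derivedSeriesOfIdeal_succ, derivedSeriesOfIdeal_zero] at hI
    exact le_center_of_lie_self_le_center (ih hI)

end LieIdeal

namespace Module.End

variable {R M : Type*} [CommRing R] [AddCommGroup M] [Module R M]

lemma ker_pow_le_ker_of_disjoint {f : End R M}
    (h : Disjoint (LinearMap.ker f) (LinearMap.range f)) (k : ℕ) :
    LinearMap.ker (f ^ k) ≤ LinearMap.ker f := by
  induction k with
  | zero =>
    intro v hv
    rw [LinearMap.mem_ker, pow_zero, one_apply] at hv
    simp [hv]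
  | succ k ih =>
    intro v hv
    rw [LinearMap.mem_ker, pow_succ, mul_apply] at hv
    exact h.le_bot ⟨ih hv, LinearMap.mem_range_self f v⟩

lemma maxGenEigenspace_le_eigenspace_of_isCompl {f : End R M} {μ : R} {W : Submodule R M}
    (hW : IsCompl (f.eigenspace μ) W) (hfW : Set.MapsTo f W W) :
    f.maxGenEigenspace μ ≤ f.eigenspace μ := by
  set g := f - μ • 1
  rw [eigenspace_def] at hW ⊢
  have hrange : LinearMap.range g ≤ W := by
    rintro _ ⟨v, rfl⟩
    obtain ⟨p, hp, q, hq, rfl⟩ := Submodule.mem_sup.mp (hW.sup_eq_top ▸ Submodule.mem_top (x := v))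
    rw [map_add, LinearMap.mem_ker.mp hp, zero_add]
    exact W.sub_mem (hfW hq) (W.smul_mem μ hq)
  intro v hv
  obtain ⟨k, hk⟩ := (mem_maxGenEigenspace f μ v).mp hv
  exact ker_pow_le_ker_of_disjoint (hW.disjoint.mono_right hrange) k hk

lemma eq_zero_of_maxGenEigenspace_le_eigenspace {K V : Type*} [Field K] [IsAlgClosed K]
    [AddCommGroup V] [Module K V] [FiniteDimensional K V] {f : End K V}
    (hgen : ∀ μ, f.maxGenEigenspace μ ≤ f.eigenspace μ) (heig : ∀ μ ≠ 0, f.eigenspace μ = ⊥) :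
    f = 0 := by
  refine LinearMap.ker_eq_top.mp (top_le_iff.mp ?_)
  rw [← iSup_maxGenEigenspace_eq_top f]
  refine iSup_le fun μ => (hgen μ).trans ?_
  rcases eq_or_ne μ 0 with rfl | hμ
  · exact (eigenspace_zero f).le
  · exact (heig μ hμ).trans_le bot_le

end Module.End

namespace SuperStructure

variable (S : SuperStructure g0 g1)

/-- `z(g)₀`: the elements of `g₀` commuting with all of `g = g₀ ⊕ g₁`. -/
def evenCenter : Submodule ℂ g0 :=
  (center ℂ g0 : Submodule ℂ g0) ⊓ LinearMap.ker S.b01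

/-- `{X ∈ g₁ | [X, g₁] ⊆ z(g)₀}`. -/
def oddBracketCentral : Submodule ℂ g1 :=
  ⨅ Y : g1, S.evenCenter.comap (S.b11.flip Y)

def IsOddCompletelyReducible : Prop :=
  ∀ W : Submodule ℂ g1, (∀ (x : g0), ∀ v ∈ W, S.b01 x v ∈ W) →
    ∃ W' : Submodule ℂ g1, (∀ (x : g0), ∀ v ∈ W', S.b01 x v ∈ W') ∧ IsCompl W W'

variable {S}

lemma mem_evenCenter {x : g0} : x ∈ S.evenCenter ↔ x ∈ center ℂ g0 ∧ S.b01 x = 0 := Iff.rfl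

lemma mem_oddBracketCentral {X : g1} :
    X ∈ S.oddBracketCentral ↔ ∀ Y, S.b11 X Y ∈ S.evenCenter := by
  simp [oddBracketCentral]

lemma b01_b11_apply_eq_zero {u : g1} (hu : u ∈ S.oddBracketCentral) (X Y : g1) :
    S.b01 (S.b11 X Y) u = 0 := by
  have h := S.jacobi111 X Y u
  rwa [S.symm11 Y u, (mem_evenCenter.mp (mem_oddBracketCentral.mp hu Y)).2,
    (mem_evenCenter.mp (mem_oddBracketCentral.mp hu X)).2, LinearMap.zero_apply,
    LinearMap.zero_apply, add_zero, add_zero] at h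

lemma commute_b01_of_mem_center {x : g0} (hx : x ∈ center ℂ g0) (y : g0) :
    Commute (S.b01 x) (S.b01 y) := by
  refine LinearMap.ext fun v => ?_
  have h := S.jacobi001 y x v
  rw [hx y, map_zero, LinearMap.zero_apply, eq_comm, sub_eq_zero] at h
  exact h.symm

variable (S) in
def centralIdeal : SuperIdeal S where
  even := S.evenCenter
  odd := S.oddBracketCentral
  lie00 x y hy := by rw [(mem_evenCenter.mp hy).1 x]; exact zero_mem _
  lie01 x v hv := by
    refine mem_oddBracketCentral.mpr fun Y => ?_
    have h := S.jacobi011 x v Y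
    rw [(mem_evenCenter.mp (mem_oddBracketCentral.mp hv Y)).1 x, eq_comm,
      add_eq_zero_iff_eq_neg] at h
    rw [h]
    exact neg_mem (mem_oddBracketCentral.mp hv _)
  lie11 u v hv := S.symm11 v u ▸ mem_oddBracketCentral.mp hv u
  lie10 x hx v := by rw [(mem_evenCenter.mp hx).2]; exact zero_mem _

lemma maxGenEigenspace_b01_le_eigenspace (hcr1 : S.IsOddCompletelyReducible) {x : g0}
    (hx : x ∈ center ℂ g0) (μ : ℂ) :
    Module.End.maxGenEigenspace (S.b01 x) μ ≤ Module.End.eigenspace (S.b01 x) μ := by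
  obtain ⟨W, hW, hcompl⟩ := hcr1 (Module.End.eigenspace (S.b01 x) μ) fun y _ hv =>
    Module.End.mapsTo_genEigenspace_of_comm (commute_b01_of_mem_center hx y) μ 1 hv
  exact Module.End.maxGenEigenspace_le_eigenspace_of_isCompl hcompl fun v hv => hW x v hv

end SuperStructure

namespace SuperIdeal

open SuperStructure

variable {S : SuperStructure g0 g1} (I : SuperIdeal S)

def evenIdeal : LieIdeal ℂ g0 :=
  { I.even with lie_mem := fun hy => I.lie00 _ _ hy }

def derived : SuperIdeal S where
  even := (derivedPair S (I.even, I.odd)).1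
  odd := (derivedPair S (I.even, I.odd)).2
  lie00 z _ ha := by
    refine (Submodule.map_span_le (ad ℂ g0 z) _ _).mpr ?_ (Submodule.mem_map_of_mem ha)
    rintro _ (⟨x, hx, y, hy, rfl⟩ | ⟨u, hu, v, hv, rfl⟩)
    · rw [ad_apply, leibniz_lie]
      exact add_mem (Submodule.subset_span (.inl ⟨_, I.lie00 z x hx, y, hy, rfl⟩))
        (Submodule.subset_span (.inl ⟨x, hx, _, I.lie00 z y hy, rfl⟩))
    · rw [ad_apply, S.jacobi011]
      exact add_mem (Submodule.subset_span (.inr ⟨_, I.lie01 z u hu, v, hv, rfl⟩))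
        (Submodule.subset_span (.inr ⟨u, hu, _, I.lie01 z v hv, rfl⟩))
  lie01 z _ ha := by
    refine (Submodule.map_span_le (S.b01 z) _ _).mpr ?_ (Submodule.mem_map_of_mem ha)
    rintro _ ⟨x, hx, v, hv, rfl⟩
    rw [← sub_add_cancel (S.b01 z (S.b01 x v)) (S.b01 x (S.b01 z v)), ← S.jacobi001]
    exact add_mem (Submodule.subset_span ⟨_, I.lie00 z x hx, v, hv, rfl⟩)
      (Submodule.subset_span ⟨x, hx, _, I.lie01 z v hv, rfl⟩)
  lie11 u _ ha := by
    refine (Submodule.map_span_le (S.b11 u) _ _).mpr ?_ (Submodule.mem_map_of_mem ha)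
    rintro _ ⟨x, hx, v, hv, rfl⟩
    rw [← add_sub_cancel_left (S.b11 (S.b01 x u) v) (S.b11 u (S.b01 x v)), ← S.jacobi011]
    exact sub_mem (Submodule.subset_span (.inl ⟨x, hx, _, I.lie11 u v hv, rfl⟩))
      (Submodule.subset_span (.inr ⟨_, I.lie10 x hx u, v, hv, rfl⟩))
  lie10 _ ha w := by
    refine (Submodule.map_span_le (S.b01.flip w) _ _).mpr ?_ (Submodule.mem_map_of_mem ha)
    rintro _ (⟨x, hx, y, hy, rfl⟩ | ⟨u, hu, v, hv, rfl⟩)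
    · rw [LinearMap.flip_apply, S.jacobi001]
      exact sub_mem (Submodule.subset_span ⟨x, hx, _, I.lie10 y hy w, rfl⟩)
        (Submodule.subset_span ⟨y, hy, _, I.lie10 x hx w, rfl⟩)
    · have h := S.jacobi111 u v w
      rw [add_assoc, add_eq_zero_iff_eq_neg] at h
      rw [LinearMap.flip_apply, h]
      refine neg_mem (add_mem ?_ ?_)
      · exact Submodule.subset_span ⟨_, S.symm11 w v ▸ I.lie11 w v hv, u, hu, rfl⟩
      · exact Submodule.subset_span ⟨_, I.lie11 w u hu, v, hv, rfl⟩

lemma lie_evenIdeal_le_derived_evenIdeal : ⁅I.evenIdeal, I.evenIdeal⁆ ≤ I.derived.evenIdeal :=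
  (LieSubmodule.lie_le_iff _ _ _).mpr fun x hx y hy =>
    Submodule.subset_span (.inl ⟨x, hx, y, hy, rfl⟩)

lemma derivedSeriesOfIdeal_evenIdeal_eq_bot {k : ℕ} {I : SuperIdeal S}
    (h : (derivedPair S)^[k] (I.even, I.odd) = (⊥, ⊥)) :
    derivedSeriesOfIdeal ℂ g0 k I.evenIdeal = ⊥ := by
  induction k generalizing I with
  | zero => exact LieSubmodule.toSubmodule_injective (congrArg Prod.fst h)
  | succ k ih =>
    rw [derivedSeriesOfIdeal_add, derivedSeriesOfIdeal_succ, derivedSeriesOfIdeal_zero]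
    exact le_bot_iff.mp ((derivedSeriesOfIdeal_mono I.lie_evenIdeal_le_derived_evenIdeal k).trans
      (ih (I := I.derived) h).le)

lemma evenIdeal_le_center [ComplementedLattice (LieIdeal ℂ g0)] {I : SuperIdeal S}
    (hI : IsSolvableIdeal S I) : I.evenIdeal ≤ center ℂ g0 :=
  let ⟨_, hk⟩ := hI
  LieIdeal.le_center_of_derivedSeriesOfIdeal_eq_bot (derivedSeriesOfIdeal_evenIdeal_eq_bot hk)

lemma odd_le_oddBracketCentral_of_derived [FiniteDimensional ℂ g1]
    (hcr1 : S.IsOddCompletelyReducible) (hcent : I.evenIdeal ≤ center ℂ g0)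
    (hder : I.derived.odd ≤ S.oddBracketCentral) :
    I.odd ≤ S.oddBracketCentral := by
  refine fun X hX => mem_oddBracketCentral.mpr fun Y => ?_
  have hxI : S.b11 X Y ∈ I.even := S.symm11 Y X ▸ I.lie11 Y X hX
  have hxc : S.b11 X Y ∈ center ℂ g0 := hcent hxI
  refine mem_evenCenter.mpr ⟨hxc, Module.End.eq_zero_of_maxGenEigenspace_le_eigenspace
    (maxGenEigenspace_b01_le_eigenspace hcr1 hxc) fun μ hμ => eq_bot_iff.mpr fun u hu => ?_⟩
  rw [Module.End.mem_eigenspace_iff] at hu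
  have hu_eq : u = μ⁻¹ • S.b01 (S.b11 X Y) u := by rw [hu, inv_smul_smul₀ hμ]
  have huI : u ∈ I.odd := hu_eq ▸ I.odd.smul_mem _ (I.lie10 _ hxI u)
  have huZ : u ∈ S.oddBracketCentral :=
    hder (hu_eq ▸ I.derived.odd.smul_mem _ (Submodule.subset_span ⟨_, hxI, u, huI, rfl⟩))
  rw [b01_b11_apply_eq_zero huZ, eq_comm, smul_eq_zero_iff_right hμ] at hu
  exact hu

lemma odd_le_oddBracketCentral [FiniteDimensional ℂ g1] [ComplementedLattice (LieIdeal ℂ g0)]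
    (hcr1 : S.IsOddCompletelyReducible) {I : SuperIdeal S} (hI : IsSolvableIdeal S I) :
    I.odd ≤ S.oddBracketCentral := by
  obtain ⟨k, hk⟩ := hI
  induction k generalizing I with
  | zero => exact (congrArg Prod.snd hk).trans_le bot_le
  | succ k ih =>
    exact I.odd_le_oddBracketCentral_of_derived hcr1 (evenIdeal_le_center ⟨k + 1, hk⟩)
      (ih (I := I.derived) hk)

end SuperIdeal

namespace SuperStructure

variable (S : SuperStructure g0 g1)

lemma isSolvableIdeal_centralIdeal : IsSolvableIdeal S S.centralIdeal := by
  have hodd : ∀ p : Submodule ℂ g0 × Submodule ℂ g1, p.1 ≤ S.evenCenter →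
      (derivedPair S p).2 = ⊥ := fun p hp => Submodule.span_eq_bot.mpr <| by
    rintro _ ⟨x, hx, v, -, rfl⟩
    rw [(mem_evenCenter.mp (hp hx)).2, LinearMap.zero_apply]
  have heven : (derivedPair S (S.evenCenter, S.oddBracketCentral)).1 ≤ S.evenCenter :=
    Submodule.span_le.mpr <| by
      rintro _ (⟨x, hx, y, -, rfl⟩ | ⟨u, -, v, hv, rfl⟩)
      · rw [SetLike.mem_coe, ← lie_skew, (mem_evenCenter.mp hx).1 y, neg_zero]
        exact zero_mem _
      · exact S.symm11 v u ▸ mem_oddBracketCentral.mp hv u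
  refine ⟨2, Prod.ext (Submodule.span_eq_bot.mpr ?_) (hodd _ heven)⟩
  rintro _ (⟨x, hx, y, -, rfl⟩ | ⟨u, hu, v, -, rfl⟩)
  · rw [← lie_skew, (mem_evenCenter.mp (heven hx)).1 y, neg_zero]
  · have hu : u = 0 := (Submodule.mem_bot ℂ).mp ((hodd _ le_rfl).le hu)
    rw [hu, map_zero, LinearMap.zero_apply]

lemma iSup_odd_of_isSolvableIdeal [FiniteDimensional ℂ g1]
    [ComplementedLattice (LieIdeal ℂ g0)] (hcr1 : S.IsOddCompletelyReducible) :
    ⨆ (I : SuperIdeal S) (_ : IsSolvableIdeal S I), I.odd = S.oddBracketCentral :=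
  le_antisymm (iSup₂_le fun _ hI => SuperIdeal.odd_le_oddBracketCentral hcr1 hI)
    (le_iSup₂_of_le S.centralIdeal S.isSolvableIdeal_centralIdeal le_rfl)

end SuperStructure

theorem stmt7_general [FiniteDimensional ℂ g1]
    (S : SuperStructure g0 g1)
    (hcr0 : ∀ W : LieSubmodule ℂ g0 g0, ∃ W', IsCompl W W')
    (hcr1 : ∀ W : Submodule ℂ g1, (∀ (x : g0), ∀ v ∈ W, S.b01 x v ∈ W) →
      ∃ W' : Submodule ℂ g1, (∀ (x : g0), ∀ v ∈ W', S.b01 x v ∈ W') ∧ IsCompl W W') :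
    ∀ X : g1,
      (X ∈ ⨆ (I : SuperIdeal S) (_ : IsSolvableIdeal S I), I.odd) ↔
        ∀ Y : g1, (∀ z : g0, ⁅S.b11 X Y, z⁆ = 0) ∧ ∀ v : g1, S.b01 (S.b11 X Y) v = 0 := by
  have : ComplementedLattice (LieIdeal ℂ g0) := ⟨hcr0⟩
  intro X
  rw [S.iSup_odd_of_isSolvableIdeal hcr1, SuperStructure.mem_oddBracketCentral]
  refine forall_congr' fun Y => ?_
  rw [SuperStructure.mem_evenCenter, LieModule.mem_maxTrivSubmodule, LinearMap.ext_iff]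
  simp only [← lie_skew _ (S.b11 X Y), neg_eq_zero, LinearMap.zero_apply]

/-- Let `g = g₀ ⊕ g₁` be a finite-dimensional classical Lie superalgebra over `ℂ` (the
adjoint action of `g₀` on `g₀` and on `g₁` is completely reducible).  Then the odd part of
the radical of `g` (the sum of all solvable ideals) equals
`{X ∈ g₁ | [X, g₁] ⊆ z(g)₀}`, where `z(g)₀` is the even part of the centre of `g`. -/
theorem stmt7 [FiniteDimensional ℂ g0] [FiniteDimensional ℂ g1]
    (S : SuperStructure g0 g1)
    (hcr0 : ∀ W : LieSubmodule ℂ g0 g0, ∃ W', IsCompl W W')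
    (hcr1 : ∀ W : Submodule ℂ g1, (∀ (x : g0), ∀ v ∈ W, S.b01 x v ∈ W) →
      ∃ W' : Submodule ℂ g1, (∀ (x : g0), ∀ v ∈ W', S.b01 x v ∈ W') ∧ IsCompl W W') :
    ∀ X : g1,
      (X ∈ ⨆ (I : SuperIdeal S) (_ : IsSolvableIdeal S I), I.odd) ↔
        ∀ Y : g1, (∀ z : g0, ⁅S.b11 X Y, z⁆ = 0) ∧ ∀ v : g1, S.b01 (S.b11 X Y) v = 0 :=
  stmt7_general S hcr0 hcr1
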